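/- arXiv:2103.13490 — 2 statements merged into one kernel-verified Lean document; each statement's English description precedes it below -/
import Mathlib

section
/- In the PO2PLS model, if r + r_x < p, the matrix [W W⊥] has full column rank, and Σ_t, Σ_{t⊥} have positive diagonal entries, then σ_e² is the smallest eigenvalue of Cov(x) = W Σ_t Wᵀ + W⊥ Σ_{t⊥} W⊥ᵀ + σ_e² I_p, and the eigenvalue σ_e² has multiplicity at least p − (r + r_x). In particular, σ_e² is identified from Cov(x). -/
open Matrix

/-! With `C = [W W⊥]` and `D = diag(Σ_t, Σ_{t⊥})`, `Cov(x) - σ_e² I = C D Cᵀ` is positive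
semidefinite, so the spectrum of `Cov(x)` is `σ_e²` plus a nonnegative set. Its kernel contains
`ker Cᵀ`, of dimension `p - rank C = p - (r + r_x) > 0`, which makes `σ_e²` an eigenvalue. -/

open scoped Pointwise

namespace Matrix

variable {m n : Type*} [Fintype n]

theorem fromCols_mul_diagonal_mul_transpose {n₁ n₂ R : Type*} [CommRing R]
    [Fintype n₁] [Fintype n₂] [DecidableEq n₁] [DecidableEq n₂] (A : Matrix m n₁ R) (B : Matrix m n₂ R)
    (d₁ : n₁ → R) (d₂ : n₂ → R) :
    fromCols A B * diagonal (Sum.elim d₁ d₂) * (fromCols A B)ᵀ =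
      A * diagonal d₁ * Aᵀ + B * diagonal d₂ * Bᵀ := by
  rw [← fromBlocks_diagonal, fromCols_mul_fromBlocks, transpose_fromCols, fromCols_mul_fromRows]
  simp

theorem finrank_ker_mulVecLin {K : Type*} [Field K] (A : Matrix m n K) :
    Module.finrank K (LinearMap.ker A.mulVecLin) = Fintype.card n - A.rank := by
  have := LinearMap.finrank_range_add_finrank_ker A.mulVecLin
  rw [Module.finrank_fintype_fun_eq_card] at this
  rw [rank]
  omega

theorem card_sub_rank_le_finrank_ker_mul_transpose [Fintype m] {K : Type*} [Field K]
    (B C : Matrix m n K) :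
    Fintype.card m - C.rank ≤ Module.finrank K (LinearMap.ker (B * Cᵀ).mulVecLin) := by
  rw [← rank_transpose, ← finrank_ker_mulVecLin, mulVecLin_mul]
  exact Submodule.finrank_mono (LinearMap.ker_le_ker_comp _ _)

variable [DecidableEq n]

theorem spectrum_add_smul_one {K : Type*} [Field K] (A : Matrix n n K) (c : K) :
    spectrum K (A + c • 1) = spectrum K A + ({c} : Set K) := by
  rw [← Algebra.algebraMap_eq_smul_one, spectrum.add_singleton_eq]

theorem zero_mem_spectrum_of_ker_ne_bot {K : Type*} [Field K] {A : Matrix n n K}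
    (h : LinearMap.ker A.mulVecLin ≠ ⊥) : (0 : K) ∈ spectrum K A := by
  obtain ⟨v, hv, hv0⟩ := Submodule.exists_mem_ne_zero_of_ne_bot h
  rw [spectrum.zero_mem_iff, isUnit_iff_isUnit_det, isUnit_iff_ne_zero, not_not]
  exact exists_mulVec_eq_zero_iff.mp ⟨v, hv0, hv⟩

theorem PosSemidef.le_of_mem_spectrum_add_smul_one {A : Matrix n n ℝ} (hA : A.PosSemidef)
    {c μ : ℝ} (hμ : μ ∈ spectrum ℝ (A + c • 1)) : c ≤ μ := by
  rw [spectrum_add_smul_one] at hμ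
  obtain ⟨a, ha, _, rfl, rfl⟩ := hμ
  have ha_nonneg : 0 ≤ a := (posSemidef_iff_isHermitian_and_spectrum_nonneg.mp hA).2 ha
  linarith

theorem posSemidef_mul_diagonal_mul_transpose [Fintype m] {d : n → ℝ} (hd : ∀ i, 0 ≤ d i)
    (C : Matrix m n ℝ) : (C * diagonal d * Cᵀ).PosSemidef := by
  simpa using (posSemidef_diagonal_iff.mpr hd).mul_mul_conjTranspose_same C

end Matrix

theorem stmt_10_general (p r rx : ℕ) (hdim : r + rx < p)
    (W : Matrix (Fin p) (Fin r) ℝ) (Wo : Matrix (Fin p) (Fin rx) ℝ)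
    (st : Fin r → ℝ) (sto : Fin rx → ℝ) (se2 : ℝ)
    (hrank : (Matrix.fromCols W Wo).rank = r + rx)
    (hst : ∀ k, 0 < st k) (hsto : ∀ k, 0 < sto k)
    (Sx : Matrix (Fin p) (Fin p) ℝ)
    (hSx : Sx = W * Matrix.diagonal st * Wᵀ + Wo * Matrix.diagonal sto * Woᵀ
        + se2 • (1 : Matrix (Fin p) (Fin p) ℝ)) :
    se2 ∈ spectrum ℝ Sx ∧
      (∀ μ ∈ spectrum ℝ Sx, se2 ≤ μ) ∧
      p - (r + rx) ≤ Module.finrank ℝ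
        (LinearMap.ker (Sx - se2 • (1 : Matrix (Fin p) (Fin p) ℝ)).mulVecLin) := by
  rw [← fromCols_mul_diagonal_mul_transpose] at hSx
  subst hSx
  set M := fromCols W Wo * diagonal (Sum.elim st sto) * (fromCols W Wo)ᵀ
  have hM : M.PosSemidef :=
    posSemidef_mul_diagonal_mul_transpose
      (Sum.forall.mpr ⟨fun k => (hst k).le, fun k => (hsto k).le⟩) _
  have hker : p - (r + rx) ≤ Module.finrank ℝ (LinearMap.ker M.mulVecLin) := by
    simpa [hrank] using card_sub_rank_le_finrank_ker_mul_transpose _ (fromCols W Wo)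
  have hker_ne : LinearMap.ker M.mulVecLin ≠ ⊥ := by
    intro h
    rw [h, finrank_bot] at hker
    omega
  rw [add_sub_cancel_right]
  refine ⟨?_, fun μ hμ => hM.le_of_mem_spectrum_add_smul_one hμ, hker⟩
  simpa [spectrum_add_smul_one] using zero_mem_spectrum_of_ker_ne_bot hker_ne

/-- If `r + r_x < p`, `[W W⊥]` has full column rank, and `Σ_t, Σ_{t⊥}` are diagonal
positive definite, then `σ_e²` is the smallest eigenvalue of
`Cov(x) = W Σ_t Wᵀ + W⊥ Σ_{t⊥} W⊥ᵀ + σ_e² I_p`, with multiplicity at least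
`p − (r + r_x)`; in particular `σ_e²` is identified from `Cov(x)`. -/
theorem stmt_10 (p r rx : ℕ) (hdim : r + rx < p)
    (W : Matrix (Fin p) (Fin r) ℝ) (Wo : Matrix (Fin p) (Fin rx) ℝ)
    (st : Fin r → ℝ) (sto : Fin rx → ℝ) (se2 : ℝ)
    (hrank : (Matrix.fromCols W Wo).rank = r + rx)
    (hst : ∀ k, 0 < st k) (hsto : ∀ k, 0 < sto k) (hse : 0 < se2)
    (Sx : Matrix (Fin p) (Fin p) ℝ)
    (hSx : Sx = W * Matrix.diagonal st * Wᵀ + Wo * Matrix.diagonal sto * Woᵀ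
        + se2 • (1 : Matrix (Fin p) (Fin p) ℝ)) :
    se2 ∈ spectrum ℝ Sx ∧
      (∀ μ ∈ spectrum ℝ Sx, se2 ≤ μ) ∧
      p - (r + rx) ≤ Module.finrank ℝ
        (LinearMap.ker (Sx - se2 • (1 : Matrix (Fin p) (Fin p) ℝ)).mulVecLin) :=
  stmt_10_general p r rx hdim W Wo st sto se2 hrank hst hsto Sx hSx
end

section
/- Under the PO2PLS identifiability conditions, the parameters Σ_t B (hence, given the ordering convention, the products σ²_{t_k} b_k) are uniquely determined by the cross-covariance Σ_{xy} = W Σ_t B Cᵀ: if W₁ Σ_{t,1} B₁ C₁ᵀ = W₂ Σ_{t,2} B₂ C₂ᵀ with Wᵢ, Cᵢ semi-orthogonal p×r resp. q×r, Σ_{t,i} diagonal positive, Bᵢ diagonal positive, and the diagonal of Σ_{t,i} Bᵢ strictly decreasing, then Σ_{t,1} B₁ = Σ_{t,2} B₂ and there is a sign matrix Δ with W₁ = W₂Δ, C₁ = C₂Δ. -/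
/-!
Put `Dᵢ = Σ_{t,i} Bᵢ`, `A = W₂ᵀ W₁` and `B = C₂ᵀ C₁`. Multiplying `W₁ D₁ C₁ᵀ = W₂ D₂ C₂ᵀ` by `C₁`
(resp. its transpose by `W₁`) and using semi-orthogonality gives `W₁ D₁ = W₂ D₂ B` and
`C₁ D₁ = C₂ D₂ A`, hence `A D₁ = D₂ B` and `B D₁ = D₂ A`. Subtracting, `(A - B)(D₁ + D₂) = 0`
entrywise, so `A = B` by positivity; then `W₁ = W₂ A`, `C₁ = C₂ A`, and `A` is orthogonal with
`A D₁ = D₂ A`. Each row of `A` has a nonzero entry, which matches every index `i` with an index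
`σ i` such that `d₂ i = d₁ (σ i)`; as both diagonals are strictly decreasing, `σ` is strictly
monotone, hence the identity. So `D₁ = D₂`, `A` commutes with a diagonal matrix with distinct
entries and is therefore diagonal, and a diagonal orthogonal matrix is a sign matrix.
-/

open Matrix

namespace Matrix

variable {ι m n k l : Type*}

theorem transpose_mul_mul_cancel [Fintype m] [Fintype n] [DecidableEq n] {W : Matrix m n ℝ}
    (hW : Wᵀ * W = 1) (X : Matrix n k ℝ) : Wᵀ * (W * X) = X := by
  rw [← Matrix.mul_assoc, hW, Matrix.one_mul]

theorem eq_mul_transpose_mul_of_mul_transpose_eq [Fintype n] [Fintype k] [Fintype l]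
    [DecidableEq n] {X : Matrix m n ℝ} {Y : Matrix m k ℝ} {C₁ : Matrix l n ℝ}
    {C₂ : Matrix l k ℝ} (hC₁ : C₁ᵀ * C₁ = 1) (h : X * C₁ᵀ = Y * C₂ᵀ) :
    X = Y * (C₂ᵀ * C₁) := by
  rw [← Matrix.mul_assoc, ← h, Matrix.mul_assoc, hC₁, Matrix.mul_one]

theorem eq_of_mul_diagonal_eq_mul_diagonal [Fintype n] [DecidableEq n] {M N : Matrix m n ℝ}
    {d : n → ℝ} (hd : ∀ j, d j ≠ 0) (h : M * diagonal d = N * diagonal d) : M = N := by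
  ext i j
  have hij := congr_fun₂ h i j
  simp only [mul_diagonal] at hij
  exact mul_right_cancel₀ (hd j) hij

theorem eq_of_mul_diagonal_eq_diagonal_mul_swap [Fintype m] [Fintype n] [DecidableEq m]
    [DecidableEq n] {M N : Matrix m n ℝ} {d₁ : n → ℝ} {d₂ : m → ℝ}
    (hd₁ : ∀ j, 0 < d₁ j) (hd₂ : ∀ i, 0 < d₂ i)
    (hMN : M * diagonal d₁ = diagonal d₂ * N) (hNM : N * diagonal d₁ = diagonal d₂ * M) :
    N = M := by
  ext i j
  have e₁ := congr_fun₂ hMN i j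
  have e₂ := congr_fun₂ hNM i j
  simp only [mul_diagonal, diagonal_mul] at e₁ e₂
  have h : (N i j - M i j) * (d₁ j + d₂ i) = 0 := by linear_combination e₂ - e₁
  have hpos : d₁ j + d₂ i ≠ 0 := (add_pos (hd₁ j) (hd₂ i)).ne'
  exact sub_eq_zero.mp ((mul_eq_zero.mp h).resolve_right hpos)

theorem exists_apply_ne_zero_of_transpose_mul_self_eq_one [Fintype ι] [DecidableEq ι]
    {A : Matrix ι ι ℝ} (hA : Aᵀ * A = 1) (i : ι) : ∃ j, A i j ≠ 0 := by
  by_contra! hrow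
  have hii := congr_fun₂ (mul_eq_one_comm.mp hA : A * Aᵀ = 1) i i
  simp [mul_apply, hrow] at hii

theorem eq_of_orthogonal_mul_diagonal_eq_diagonal_mul [Fintype ι] [LinearOrder ι]
    {A : Matrix ι ι ℝ} {d₁ d₂ : ι → ℝ} (hA : Aᵀ * A = 1) (hd₁ : StrictAnti d₁)
    (hd₂ : StrictAnti d₂) (h : A * diagonal d₁ = diagonal d₂ * A) : d₁ = d₂ := by
  have hmatch : ∀ i j, A i j ≠ 0 → d₂ i = d₁ j := by
    intro i j hij
    have e := congr_fun₂ h i j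
    simp only [mul_diagonal, diagonal_mul] at e
    exact (mul_left_cancel₀ hij (by linear_combination e)).symm
  choose σ hσ using exists_apply_ne_zero_of_transpose_mul_self_eq_one hA
  have hσd : ∀ i, d₂ i = d₁ (σ i) := fun i => hmatch i (σ i) (hσ i)
  have hσmono : StrictMono σ := fun a b hab =>
    hd₁.lt_iff_gt.mp (by rw [← hσd, ← hσd]; exact hd₂ hab)
  funext i
  rw [hσd, hσmono.eq_id]
  rfl

theorem eq_diagonal_diag_of_mul_diagonal_eq_diagonal_mul [Fintype ι] [DecidableEq ι]
    {A : Matrix ι ι ℝ} {d : ι → ℝ} (hd : Function.Injective d)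
    (h : A * diagonal d = diagonal d * A) : A = diagonal A.diag := by
  ext i j
  rcases eq_or_ne i j with rfl | hij
  · simp
  · have e := congr_fun₂ h i j
    simp only [mul_diagonal, diagonal_mul] at e
    have hd' : d j - d i ≠ 0 := sub_ne_zero.mpr (hd.ne hij.symm)
    rw [diagonal_apply_ne _ hij]
    exact (mul_eq_zero.mp (by linear_combination e : A i j * (d j - d i) = 0)).resolve_right hd'

theorem sign_of_diagonal_transpose_mul_self_eq_one [DecidableEq ι] [Fintype ι] {ε : ι → ℝ}
    (h : (diagonal ε)ᵀ * diagonal ε = 1) (i : ι) : ε i = 1 ∨ ε i = -1 := by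
  have hii := congr_fun₂ h i i
  simp only [diagonal_transpose, diagonal_mul_diagonal, diagonal_apply_eq, one_apply_eq] at hii
  exact mul_self_eq_one_iff.mp hii

theorem svd_unique_of_strictAnti [Fintype m] [Fintype l] [Fintype ι] [LinearOrder ι]
    {W₁ W₂ : Matrix m ι ℝ} {C₁ C₂ : Matrix l ι ℝ} {d₁ d₂ : ι → ℝ}
    (hW₁ : W₁ᵀ * W₁ = 1) (hW₂ : W₂ᵀ * W₂ = 1) (hC₁ : C₁ᵀ * C₁ = 1) (hC₂ : C₂ᵀ * C₂ = 1)
    (hd₁pos : ∀ k, 0 < d₁ k) (hd₂pos : ∀ k, 0 < d₂ k)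
    (hd₁ : StrictAnti d₁) (hd₂ : StrictAnti d₂)
    (h : W₁ * diagonal d₁ * C₁ᵀ = W₂ * diagonal d₂ * C₂ᵀ) :
    d₁ = d₂ ∧ ∃ ε : ι → ℝ, (∀ k, ε k = 1 ∨ ε k = -1) ∧
      W₁ = W₂ * diagonal ε ∧ C₁ = C₂ * diagonal ε := by
  set A := W₂ᵀ * W₁
  set B := C₂ᵀ * C₁
  have hWD : W₁ * diagonal d₁ = W₂ * diagonal d₂ * B :=
    eq_mul_transpose_mul_of_mul_transpose_eq hC₁ h
  have hCD : C₁ * diagonal d₁ = C₂ * diagonal d₂ * A :=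
    eq_mul_transpose_mul_of_mul_transpose_eq hW₁ <| by
      simpa only [transpose_mul, diagonal_transpose, transpose_transpose, Matrix.mul_assoc]
        using congr_arg transpose h
  have hAB : A * diagonal d₁ = diagonal d₂ * B := by
    rw [Matrix.mul_assoc, hWD, Matrix.mul_assoc, transpose_mul_mul_cancel hW₂]
  have hBA : B * diagonal d₁ = diagonal d₂ * A := by
    rw [Matrix.mul_assoc, hCD, Matrix.mul_assoc, transpose_mul_mul_cancel hC₂]
  have hBeq : B = A := eq_of_mul_diagonal_eq_diagonal_mul_swap hd₁pos hd₂pos hAB hBA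
  have hAD : A * diagonal d₁ = diagonal d₂ * A := hBeq ▸ hAB
  have hd₁ne : ∀ k, d₁ k ≠ 0 := fun k => (hd₁pos k).ne'
  have hW : W₁ = W₂ * A := eq_of_mul_diagonal_eq_mul_diagonal hd₁ne <| by
    rw [hWD, hBeq, Matrix.mul_assoc, Matrix.mul_assoc, hAD]
  have hC : C₁ = C₂ * A := eq_of_mul_diagonal_eq_mul_diagonal hd₁ne <| by
    rw [hCD, Matrix.mul_assoc, Matrix.mul_assoc, hAD]
  have hA : Aᵀ * A = 1 :=
    calc Aᵀ * A = (W₂ * A)ᵀ * (W₂ * A) := by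
          rw [transpose_mul W₂ A, Matrix.mul_assoc, transpose_mul_mul_cancel hW₂]
      _ = 1 := by rw [← hW, hW₁]
  obtain rfl : d₁ = d₂ := eq_of_orthogonal_mul_diagonal_eq_diagonal_mul hA hd₁ hd₂ hAD
  have hAdiag := eq_diagonal_diag_of_mul_diagonal_eq_diagonal_mul hd₁.injective hAD
  rw [hAdiag] at hA hW hC
  exact ⟨rfl, A.diag, sign_of_diagonal_transpose_mul_self_eq_one hA, hW, hC⟩

end Matrix

theorem stmt_17_general (p q r : ℕ)
    (W1 W2 : Matrix (Fin p) (Fin r) ℝ) (C1 C2 : Matrix (Fin q) (Fin r) ℝ)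
    (st1 st2 b1 b2 : Fin r → ℝ)
    (hW1 : W1ᵀ * W1 = 1) (hW2 : W2ᵀ * W2 = 1)
    (hC1 : C1ᵀ * C1 = 1) (hC2 : C2ᵀ * C2 = 1)
    (hst1 : ∀ k, 0 < st1 k) (hst2 : ∀ k, 0 < st2 k)
    (hb1 : ∀ k, 0 < b1 k) (hb2 : ∀ k, 0 < b2 k)
    (hdec1 : StrictAnti (fun k => st1 k * b1 k))
    (hdec2 : StrictAnti (fun k => st2 k * b2 k))
    (heq : W1 * Matrix.diagonal st1 * Matrix.diagonal b1 * C1ᵀ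
        = W2 * Matrix.diagonal st2 * Matrix.diagonal b2 * C2ᵀ) :
    Matrix.diagonal st1 * Matrix.diagonal b1 = Matrix.diagonal st2 * Matrix.diagonal b2 ∧
      ∃ ε : Fin r → ℝ, (∀ k, ε k = 1 ∨ ε k = -1) ∧
        W1 = W2 * Matrix.diagonal ε ∧ C1 = C2 * Matrix.diagonal ε := by
  rw [Matrix.mul_assoc W1, Matrix.mul_assoc W2, diagonal_mul_diagonal,
    diagonal_mul_diagonal] at heq
  obtain ⟨hd, hsigns⟩ := svd_unique_of_strictAnti hW1 hW2 hC1 hC2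
    (fun k => mul_pos (hst1 k) (hb1 k)) (fun k => mul_pos (hst2 k) (hb2 k)) hdec1 hdec2 heq
  rw [diagonal_mul_diagonal, diagonal_mul_diagonal, hd]
  exact ⟨rfl, hsigns⟩

/-- Under the PO2PLS identifiability conditions, `Σ_t B` is uniquely determined by
the cross-covariance `Σ_{xy} = W Σ_t B Cᵀ`: equal cross-covariances force
`Σ_{t,1} B₁ = Σ_{t,2} B₂` and `W₁ = W₂ Δ`, `C₁ = C₂ Δ` for a sign matrix `Δ`. -/
theorem stmt_17 (p q r : ℕ) (hp : r ≤ p) (hq : r ≤ q)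
    (W1 W2 : Matrix (Fin p) (Fin r) ℝ) (C1 C2 : Matrix (Fin q) (Fin r) ℝ)
    (st1 st2 b1 b2 : Fin r → ℝ)
    (hW1 : W1ᵀ * W1 = 1) (hW2 : W2ᵀ * W2 = 1)
    (hC1 : C1ᵀ * C1 = 1) (hC2 : C2ᵀ * C2 = 1)
    (hst1 : ∀ k, 0 < st1 k) (hst2 : ∀ k, 0 < st2 k)
    (hb1 : ∀ k, 0 < b1 k) (hb2 : ∀ k, 0 < b2 k)
    (hdec1 : StrictAnti (fun k => st1 k * b1 k))
    (hdec2 : StrictAnti (fun k => st2 k * b2 k))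
    (heq : W1 * Matrix.diagonal st1 * Matrix.diagonal b1 * C1ᵀ
        = W2 * Matrix.diagonal st2 * Matrix.diagonal b2 * C2ᵀ) :
    Matrix.diagonal st1 * Matrix.diagonal b1 = Matrix.diagonal st2 * Matrix.diagonal b2 ∧
      ∃ ε : Fin r → ℝ, (∀ k, ε k = 1 ∨ ε k = -1) ∧
        W1 = W2 * Matrix.diagonal ε ∧ C1 = C2 * Matrix.diagonal ε :=
  stmt_17_general p q r W1 W2 C1 C2 st1 st2 b1 b2 hW1 hW2 hC1 hC2 hst1 hst2 hb1 hb2 hdec1 hdec2 heq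
end
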